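/- arXiv:2601.01709 — 3 statements merged into one kernel-verified Lean document; each statement's English description precedes it below -/
import Mathlib

section
/- Let T be a natural number, let γ > 0 and ε be real numbers, and let S, u, B : ℕ → ℝ be sequences satisfying the self-financing recursion with proportional transaction costs: for every t < T, u(t)·S(t+1) + γ⁻¹·B(t) = u(t+1)·S(t+1) + B(t+1) + ε·|u(t+1) − u(t)|·S(t+1). Define the portfolio value Π(t) := u(t)·S(t) + B(t). Then for every t ≤ T, Π(t) = γ^(T−t)·Π(T) − ∑_{j=0}^{T−t−1} γ^j · u(t+j) · (γ·S(t+j+1) − S(t+j)) + ε · ∑_{j=0}^{T−t−1} γ^(j+1) · |u(t+j+1) − u(t+j)| · S(t+j+1). -/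
/-- Self-financing recursion with proportional transaction costs implies the
closed-form (telescoping) representation of the portfolio value
`Π(t) = u(t)·S(t) + B(t)`. -/
theorem stmt_0 (T : ℕ) (γ ε : ℝ) (hγ : 0 < γ) (S u B : ℕ → ℝ)
    (hsf : ∀ t < T, u t * S (t + 1) + γ⁻¹ * B t =
      u (t + 1) * S (t + 1) + B (t + 1) + ε * |u (t + 1) - u t| * S (t + 1)) :
    ∀ t ≤ T, u t * S t + B t =
      γ ^ (T - t) * (u T * S T + B T)
        - ∑ j ∈ Finset.range (T - t),
            γ ^ j * u (t + j) * (γ * S (t + j + 1) - S (t + j))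
        + ε * ∑ j ∈ Finset.range (T - t),
            γ ^ (j + 1) * |u (t + j + 1) - u (t + j)| * S (t + j + 1) := by
  have key : ∀ d : ℕ, ∀ t : ℕ, t + d = T →
      u t * S t + B t =
      γ ^ d * (u T * S T + B T)
        - ∑ j ∈ Finset.range d,
            γ ^ j * u (t + j) * (γ * S (t + j + 1) - S (t + j))
        + ε * ∑ j ∈ Finset.range d,
            γ ^ (j + 1) * |u (t + j + 1) - u (t + j)| * S (t + j + 1) := by
    intro d
    induction d with
    | zero => intro t h; simp [← h]
    | succ d ih =>
      intro t heq
      have h1 := hsf t (by omega)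
      have h2 := ih (t + 1) (by omega)
      have hB : B t = γ * (u (t + 1) * S (t + 1) + B (t + 1)
          + ε * |u (t + 1) - u t| * S (t + 1) - u t * S (t + 1)) := by
        have hγ' : γ ≠ 0 := ne_of_gt hγ
        field_simp at h1
        linarith
      have hidx : ∀ j : ℕ, t + 1 + j = t + j + 1 := fun j => by omega
      have hidx2 : ∀ j : ℕ, t + (j + 1) = t + j + 1 := fun j => rfl
      simp only [hidx] at h2
      have hs1 : ∑ j ∈ Finset.range (d + 1),
            γ ^ j * u (t + j) * (γ * S (t + j + 1) - S (t + j))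
          = γ * (∑ j ∈ Finset.range d,
              γ ^ j * u (t + j + 1) * (γ * S (t + j + 1 + 1) - S (t + j + 1)))
            + u t * (γ * S (t + 1) - S t) := by
        rw [Finset.sum_range_succ', Finset.mul_sum]
        simp only [hidx2, Nat.add_zero, pow_zero, one_mul]
        exact congrArg₂ (· + ·) (Finset.sum_congr rfl fun j _ => by ring) rfl
      have hs2 : ∑ j ∈ Finset.range (d + 1),
            γ ^ (j + 1) * |u (t + j + 1) - u (t + j)| * S (t + j + 1)
          = γ * (∑ j ∈ Finset.range d,
              γ ^ (j + 1) * |u (t + j + 1 + 1) - u (t + j + 1)| * S (t + j + 1 + 1))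
            + γ * |u (t + 1) - u t| * S (t + 1) := by
        rw [Finset.sum_range_succ', Finset.mul_sum]
        simp only [hidx2, Nat.add_zero, pow_zero, pow_one, one_mul]
        exact congrArg₂ (· + ·) (Finset.sum_congr rfl fun j _ => by ring) (by ring)
      rw [hs1, hs2, hB, pow_succ]
      linear_combination γ * h2
  intro t ht
  exact key (T - t) t (by omega)
end

section
/- Let T be a natural number, let γ > 0 and ε, ε' be real numbers, and let S, u : ℕ → ℝ with S(t) ≥ 0 for all t. Suppose B, B' : ℕ → ℝ satisfy the self-financing recursions with proportional transaction cost rates ε and ε' respectively (i.e., for all t < T, u(t)·S(t+1) + γ⁻¹·B(t) = u(t+1)·S(t+1) + B(t+1) + ε·|u(t+1) − u(t)|·S(t+1), and similarly for B' with ε'), and that B(T) = B'(T). Define Π(t) := u(t)·S(t) + B(t) and Π'(t) := u(t)·S(t) + B'(t). Then for every t ≤ T, Π(t) − Π'(t) = (ε − ε') · ∑_{j=0}^{T−t−1} γ^(j+1) · |u(t+j+1) − u(t+j)| · S(t+j+1); in particular, if ε ≥ ε' then Π(t) ≥ Π'(t) for all t ≤ T. -/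
/-- With the same hedging strategy and the same terminal deposit, the portfolio
value is affine and nondecreasing in the proportional transaction cost rate. -/
theorem stmt_1 (T : ℕ) (γ ε ε' : ℝ) (hγ : 0 < γ) (S u B B' : ℕ → ℝ)
    (hS : ∀ t, 0 ≤ S t)
    (hsf : ∀ t < T, u t * S (t + 1) + γ⁻¹ * B t =
      u (t + 1) * S (t + 1) + B (t + 1) + ε * |u (t + 1) - u t| * S (t + 1))
    (hsf' : ∀ t < T, u t * S (t + 1) + γ⁻¹ * B' t =
      u (t + 1) * S (t + 1) + B' (t + 1) + ε' * |u (t + 1) - u t| * S (t + 1))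
    (hBT : B T = B' T) :
    (∀ t ≤ T, (u t * S t + B t) - (u t * S t + B' t) =
      (ε - ε') * ∑ j ∈ Finset.range (T - t),
        γ ^ (j + 1) * |u (t + j + 1) - u (t + j)| * S (t + j + 1)) ∧
    (ε' ≤ ε → ∀ t ≤ T, u t * S t + B' t ≤ u t * S t + B t) := by
  have key : ∀ d t, t + d = T → B t - B' t =
      (ε - ε') * ∑ j ∈ Finset.range d,
        γ ^ (j + 1) * |u (t + j + 1) - u (t + j)| * S (t + j + 1) := by
    intro d
    induction d with
    | zero => intro t ht; simp at ht; simp [ht, hBT]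
    | succ d ih =>
      intro t ht
      have htT : t < T := by omega
      have h1 := hsf t htT
      have h2 := hsf' t htT
      have hrec : γ⁻¹ * (B t - B' t) =
          (B (t + 1) - B' (t + 1)) + (ε - ε') * |u (t + 1) - u t| * S (t + 1) := by
        nlinarith [h1, h2]
      have hBt : B t - B' t =
          γ * ((B (t + 1) - B' (t + 1)) + (ε - ε') * |u (t + 1) - u t| * S (t + 1)) := by
        rw [← hrec, ← mul_assoc, mul_inv_cancel₀ (ne_of_gt hγ), one_mul]
      have ih' := ih (t + 1) (by omega)
      rw [hBt, ih', Finset.sum_range_succ']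
      have hterm : ∀ j, γ ^ (j + 1 + 1) * |u (t + (j + 1) + 1) - u (t + (j + 1))| *
          S (t + (j + 1) + 1) =
          γ * (γ ^ (j + 1) * |u (t + 1 + j + 1) - u (t + 1 + j)| * S (t + 1 + j + 1)) := by
        intro j
        have e1 : t + (j + 1) + 1 = t + 1 + j + 1 := by omega
        have e2 : t + (j + 1) = t + 1 + j := by omega
        rw [e1, e2]; ring
      rw [Finset.sum_congr rfl fun j _ => hterm j, ← Finset.mul_sum]
      simp only [Nat.add_zero]
      ring
  constructor
  · intro t ht
    have := key (T - t) t (by omega)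
    simpa using this
  · intro hεε t ht
    have := key (T - t) t (by omega)
    have hsum : 0 ≤ ∑ j ∈ Finset.range (T - t),
        γ ^ (j + 1) * |u (t + j + 1) - u (t + j)| * S (t + j + 1) := by
      apply Finset.sum_nonneg
      intro j _
      exact mul_nonneg (mul_nonneg (by positivity) (abs_nonneg _)) (hS _)
    nlinarith [this, hsum]
end

section
/- Let (Ω, μ) be a probability space, T a natural number, γ > 0 and λ ≥ 0 real numbers, and U a nonempty type (of hedging policies). For each u ∈ U and each time τ ∈ Fin (T+1), let A_τ(u), G_τ(u) : Ω → ℝ be random variables in L²(μ) with G_τ(u) ≥ 0 μ-almost everywhere, and for ε ∈ ℝ set Π_τ(ε, u) := A_τ(u) + ε·G_τ(u). Define V(ε, u) := E[−Π_0(ε, u)] − λ·∑_{τ=0}^{T} γ^τ·√(Var(Π_τ(ε, u))). Let ε₀ ≥ 0 be such that for every u ∈ U and every τ, either Var(G_τ(u)) = 0 or ε₀·Var(G_τ(u)) ≥ −Cov(A_τ(u), G_τ(u)), and assume that for every ε ≥ ε₀ the set {V(ε, u) : u ∈ U} is bounded above. Then the option price C(ε) := −⨆_{u ∈ U} V(ε,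 u) is monotone nondecreasing on [ε₀, ∞). -/
open MeasureTheory

/-- Variance `Var(Z) := E[(Z − E[Z])²]`. -/
noncomputable def Var {Ω : Type*} [MeasurableSpace Ω] (μ : Measure Ω) (Z : Ω → ℝ) : ℝ :=
  ∫ ω, (Z ω - ∫ ω', Z ω' ∂μ) ^ 2 ∂μ

/-- Covariance `Cov(X, Y) := E[(X − E[X])(Y − E[Y])]`. -/
noncomputable def Cov {Ω : Type*} [MeasurableSpace Ω] (μ : Measure Ω) (X Y : Ω → ℝ) : ℝ :=
  ∫ ω, (X ω - ∫ ω', X ω' ∂μ) * (Y ω - ∫ ω', Y ω' ∂μ) ∂μ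

/-!
The portfolio value `Π(ε) = A + ε G` is affine in `ε`, so each variance
`Var(Π_τ(ε)) = Var A + 2ε Cov(A, G) + ε² Var G` is a convex quadratic in `ε` whose vertex
`-Cov(A, G) / Var G` lies at or left of `ε₀` (when `Var G = 0`, also `Cov(A, G) = 0` and the
variance is constant); hence it increases on `[ε₀, ∞)`. Since also `G ≥ 0`, the mean
`E[-Π_0(ε)]` decreases in `ε`, so every `V(·, u)` decreases on `[ε₀, ∞)`, and so does their
supremum.
-/

open ProbabilityTheory Set

theorem antitoneOn_ciSup {ι α β : Type*} [Preorder α] [ConditionallyCompleteLattice β]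
    {f : ι → α → β} {s : Set α} (hf : ∀ i, AntitoneOn (f i) s)
    (hbdd : ∀ x ∈ s, BddAbove (range fun i => f i x)) :
    AntitoneOn (fun x => ⨆ i, f i x) s :=
  fun _ ha _ hb hab => ciSup_mono (hbdd _ ha) fun i => hf i ha hb hab

section Moments

variable {Ω : Type*} [MeasurableSpace Ω] {μ : Measure Ω} {X Y : Ω → ℝ}

theorem Var_eq_variance (hX : AEMeasurable X μ) : Var μ X = Var[X; μ] :=
  (variance_eq_integral hX).symm

theorem Cov_eq_covariance : Cov μ X Y = cov[X, Y; μ] := rfl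

theorem covariance_eq_zero_of_variance_eq_zero [IsFiniteMeasure μ] (hY : MemLp Y 2 μ)
    (h : Var[Y; μ] = 0) : cov[X, Y; μ] = 0 := by
  rw [covariance, ← integral_zero Ω ℝ]
  refine integral_congr_ae ?_
  filter_upwards [ae_eq_integral_of_variance_eq_zero hY h] with ω hω
  simp [hω]

theorem variance_add_const_mul [IsFiniteMeasure μ] (hX : MemLp X 2 μ) (hY : MemLp Y 2 μ)
    (ε : ℝ) :
    Var[fun ω => X ω + ε * Y ω; μ] = Var[X; μ] + 2 * ε * cov[X, Y; μ] + ε ^ 2 * Var[Y; μ] := by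
  rw [show (fun ω => X ω + ε * Y ω) = X + fun ω => ε * Y ω from rfl,
    variance_add hX (hY.const_mul ε), covariance_const_mul_right, variance_const_mul]
  ring

theorem monotoneOn_variance_add_const_mul [IsFiniteMeasure μ] (hX : MemLp X 2 μ)
    (hY : MemLp Y 2 μ) {ε₀ : ℝ} (h : -cov[X, Y; μ] ≤ ε₀ * Var[Y; μ]) :
    MonotoneOn (fun ε => Var[fun ω => X ω + ε * Y ω; μ]) (Ici ε₀) := by
  intro ε₁ hε₁ ε₂ hε₂ h12
  simp only [mem_Ici] at hε₁ hε₂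
  have hvar : 0 ≤ Var[Y; μ] := variance_nonneg Y μ
  simp only [variance_add_const_mul hX hY]
  -- q(ε₂) - q(ε₁) = (ε₂ - ε₁) (2 Cov + (ε₁ + ε₂) Var) and ε₁ + ε₂ ≥ 2 ε₀
  nlinarith [mul_nonneg (sub_nonneg.2 h12) (add_nonneg (sub_nonneg.2 (add_le_add hε₁ hε₂))
    (by linarith : (0 : ℝ) ≤ cov[X, Y; μ] + ε₀ * Var[Y; μ])), mul_nonneg
    (mul_nonneg (sub_nonneg.2 h12) (sub_nonneg.2 (add_le_add hε₁ hε₂))) hvar]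

theorem antitone_integral_neg_add_const_mul (hX : Integrable X μ) (hY : Integrable Y μ)
    (hY₀ : 0 ≤ᵐ[μ] Y) : Antitone fun ε : ℝ => ∫ ω, -(X ω + ε * Y ω) ∂μ := by
  intro ε₁ ε₂ h12
  refine integral_mono_ae (hX.add (hY.const_mul ε₂)).neg (hX.add (hY.const_mul ε₁)).neg ?_
  filter_upwards [hY₀] with ω hω
  simpa using mul_le_mul_of_nonneg_right h12 hω

end Moments

section Pricing

variable {Ω : Type*} [MeasurableSpace Ω] {μ : Measure Ω} {T : ℕ}

/-- The value `V(ε, u)` of a single policy, with `A τ = A_τ(u)` and `G τ = G_τ(u)`. -/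
noncomputable def policyValue (μ : Measure Ω) (γ lam : ℝ) (A G : Fin (T + 1) → Ω → ℝ)
    (ε : ℝ) : ℝ :=
  (∫ ω, -(A 0 ω + ε * G 0 ω) ∂μ) -
    lam * ∑ τ : Fin (T + 1), γ ^ (τ : ℕ) * Real.sqrt (Var μ (fun ω => A τ ω + ε * G τ ω))

theorem antitoneOn_policyValue [IsFiniteMeasure μ] {γ lam ε₀ : ℝ} (hγ : 0 ≤ γ)
    (hlam : 0 ≤ lam) {A G : Fin (T + 1) → Ω → ℝ} (hA : ∀ τ, MemLp (A τ) 2 μ)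
    (hG : ∀ τ, MemLp (G τ) 2 μ) (hG₀ : 0 ≤ᵐ[μ] G 0)
    (hε₀ : ∀ τ, -Cov μ (A τ) (G τ) ≤ ε₀ * Var μ (G τ)) :
    AntitoneOn (policyValue μ γ lam A G) (Ici ε₀) := by
  intro ε₁ hε₁ ε₂ hε₂ h12
  have hmean := antitone_integral_neg_add_const_mul ((hA 0).integrable one_le_two)
    ((hG 0).integrable one_le_two) hG₀ h12
  refine sub_le_sub hmean (mul_le_mul_of_nonneg_left (Finset.sum_le_sum fun τ _ => ?_) hlam)
  refine mul_le_mul_of_nonneg_left (Real.sqrt_le_sqrt ?_) (pow_nonneg hγ _)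
  have hvar := monotoneOn_variance_add_const_mul (hA τ) (hG τ)
    (by simpa [Var_eq_variance (hG τ).aemeasurable, Cov_eq_covariance] using hε₀ τ) hε₁ hε₂ h12
  rw [Var_eq_variance, Var_eq_variance]
  exacts [hvar, ((hA τ).add ((hG τ).const_mul ε₂)).aemeasurable,
    ((hA τ).add ((hG τ).const_mul ε₁)).aemeasurable]

end Pricing

theorem stmt_7_general {Ω : Type*} [MeasurableSpace Ω] (μ : Measure Ω) [IsProbabilityMeasure μ]
    (T : ℕ) (γ lam : ℝ) (hγ : 0 < γ) (hlam : 0 ≤ lam)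
    {U : Type*}
    (A G : U → Fin (T + 1) → Ω → ℝ)
    (hA : ∀ u τ, MemLp (A u τ) 2 μ) (hG : ∀ u τ, MemLp (G u τ) 2 μ)
    (hGpos : ∀ u τ, ∀ᵐ ω ∂μ, 0 ≤ G u τ ω)
    (ε₀ : ℝ)
    (hε₀' : ∀ u τ, Var μ (G u τ) = 0 ∨
      ε₀ * Var μ (G u τ) ≥ -(Cov μ (A u τ) (G u τ)))
    (hbdd : ∀ ε : ℝ, ε₀ ≤ ε → BddAbove (Set.range fun u : U =>
      (∫ ω, -(A u 0 ω + ε * G u 0 ω) ∂μ) -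
        lam * ∑ τ : Fin (T + 1),
          γ ^ (τ : ℕ) * Real.sqrt (Var μ (fun ω => A u τ ω + ε * G u τ ω)))) :
    MonotoneOn (fun ε : ℝ => -(⨆ u : U,
      ((∫ ω, -(A u 0 ω + ε * G u 0 ω) ∂μ) -
        lam * ∑ τ : Fin (T + 1),
          γ ^ (τ : ℕ) * Real.sqrt (Var μ (fun ω => A u τ ω + ε * G u τ ω)))))
      (Set.Ici ε₀) := by
  have hvertex : ∀ u τ, -Cov μ (A u τ) (G u τ) ≤ ε₀ * Var μ (G u τ) := fun u τ => by
    rcases hε₀' u τ with hvar | hvertex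
    · rw [hvar, Cov_eq_covariance, covariance_eq_zero_of_variance_eq_zero (hG u τ)
        (by rwa [← Var_eq_variance (hG u τ).aemeasurable])]
      simp
    · exact hvertex
  have hvalue : ∀ u, AntitoneOn (policyValue μ γ lam (A u) (G u)) (Ici ε₀) := fun u =>
    antitoneOn_policyValue hγ.le hlam (hA u) (hG u) (hGpos u 0) (hvertex u)
  exact (antitoneOn_ciSup hvalue hbdd).neg

/-- ε-monotonicity of the adaptive-QLBS option price: with portfolio value
`Π_τ(ε, u) = A_τ(u) + ε·G_τ(u)` affine in the transaction-cost rate `ε`,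
`G_τ(u) ≥ 0` a.e., and value
`V(ε, u) = E[−Π_0(ε, u)] − λ·∑_τ γ^τ·√(Var(Π_τ(ε, u)))`, the option price
`C(ε) := −⨆_u V(ε, u)` is nondecreasing on `[ε₀, ∞)` for `ε₀` large enough
uniformly over policies. -/
theorem stmt_7 {Ω : Type*} [MeasurableSpace Ω] (μ : Measure Ω) [IsProbabilityMeasure μ]
    (T : ℕ) (γ lam : ℝ) (hγ : 0 < γ) (hlam : 0 ≤ lam)
    {U : Type*} [Nonempty U]
    (A G : U → Fin (T + 1) → Ω → ℝ)
    (hA : ∀ u τ, MemLp (A u τ) 2 μ) (hG : ∀ u τ, MemLp (G u τ) 2 μ)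
    (hGpos : ∀ u τ, ∀ᵐ ω ∂μ, 0 ≤ G u τ ω)
    (ε₀ : ℝ) (hε₀ : 0 ≤ ε₀)
    (hε₀' : ∀ u τ, Var μ (G u τ) = 0 ∨
      ε₀ * Var μ (G u τ) ≥ -(Cov μ (A u τ) (G u τ)))
    (hbdd : ∀ ε : ℝ, ε₀ ≤ ε → BddAbove (Set.range fun u : U =>
      (∫ ω, -(A u 0 ω + ε * G u 0 ω) ∂μ) -
        lam * ∑ τ : Fin (T + 1),
          γ ^ (τ : ℕ) * Real.sqrt (Var μ (fun ω => A u τ ω + ε * G u τ ω)))) :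
    MonotoneOn (fun ε : ℝ => -(⨆ u : U,
      ((∫ ω, -(A u 0 ω + ε * G u 0 ω) ∂μ) -
        lam * ∑ τ : Fin (T + 1),
          γ ^ (τ : ℕ) * Real.sqrt (Var μ (fun ω => A u τ ω + ε * G u τ ω)))))
      (Set.Ici ε₀) :=
  stmt_7_general μ T γ lam hγ hlam A G hA hG hGpos ε₀ hε₀' hbdd
end
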